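/- arXiv:2309.13889 — 10 statements merged into one kernel-verified Lean document; each statement's English description precedes it below -/
import Mathlib

section
/- Let Z = [z̲*, z̄*] ⊂ ℝ^{n_z} be a closed box (interval) and μ : Z → ℝ^p be differentiable on Z and Jacobian sign-stable with sign pattern σ ∈ {−1,+1}^{p×n_z}, i.e., σ_{ij}·∂μ_i/∂z_j(z) ≥ 0 for all z ∈ Z and all (i,j). For each i ∈ {1,…,p} define the binary diagonal matrix D^i ∈ ℝ^{n_z×n_z} by D^i_{jj} = 1 if σ_{ij} = +1 and D^i_{jj} = 0 otherwise, and define μ_d : Z × Z → ℝ^p componentwise by μ_{d,i}(z₁,z₂) := μ_i(D^i z₁ + (I − D^i) z₂). Then μ_d is a decomposition function for μ: (i) μ_d(z,z) = μ(z) for all z ∈ Z; (ii) if z₁ ≤ ẑ₁ (all points in Z) then μ_d(z₁,z₂) ≤ μ_d(ẑ₁,z₂); (iii) if z₂ ≤ ẑ₂ then μ_d(z₁,ẑ₂) ≤ μ_d(z₁,z₂). Consequently, whenever z̲ ≤ z ≤ z̄ with z̲, z̄ ∈ Z, it holds that μ_d(z̲,z̄) ≤ μ(z) ≤ μ_d(z̄,z̲).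 -/
/-!
Along the segment from `a` to `b` inside the box, the mean value theorem writes
`μ_i b - μ_i a` as `∑ⱼ (b j - a j) ∂μ_i/∂z_j` at some intermediate point. For the selected points
`a = D^i z₁ + (I - D^i) z₂` and `b = D^i z₁' + (I - D^i) z₂'`, the `j`-th increment is
`z₁' j - z₁ j` where `σ_ij = 1` and `z₂' j - z₂ j` where `σ_ij = -1`, so it carries the sign
`σ_ij` of `∂μ_i/∂z_j` as soon as `z₁ ≤ z₁'` and `z₂' ≤ z₂`. Every term is then nonnegative, which
gives monotonicity in the first argument and antitonicity in the second at once; the enclosure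
`μ_d(z̲, z̄) ≤ μ_d(z, z) = μ(z) ≤ μ_d(z̄, z̲)` is the special case `z₁ ≤ z₁' = z`, `z₂ ≥ z₂' = z`.
-/

theorem Convex.le_of_hasFDerivWithinAt_nonneg {E : Type*} [NormedAddCommGroup E]
    [NormedSpace ℝ E] {f : E → ℝ} {f' : E → StrongDual ℝ E} {s : Set E} (hs : Convex ℝ s)
    (hf : ∀ z ∈ s, HasFDerivWithinAt f (f' z) s z) {x y : E} (hx : x ∈ s) (hy : y ∈ s)
    (hf' : ∀ z ∈ s, 0 ≤ f' z (y - x)) : f x ≤ f y := by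
  obtain ⟨z, hz, hxy⟩ := domain_mvt hf hs hx hy
  linarith [hf' z (hs.segment_subset hx hy hz)]

theorem LinearMap.pi_apply_eq_sum_single {R M ι : Type*} [Semiring R] [AddCommMonoid M]
    [Module R M] [Fintype ι] [DecidableEq ι] (f : (ι → R) →ₗ[R] M) (v : ι → R) :
    f v = ∑ j, v j • f (Pi.single j 1) := by
  conv_lhs => rw [← Finset.univ_sum_single v, map_sum]
  refine Finset.sum_congr rfl fun j _ => ?_
  rw [← map_smul, ← Pi.single_smul', smul_eq_mul, mul_one]

theorem Pi.ite_mem_Icc {ι α : Type*} [Preorder α] {l u z₁ z₂ : ι → α} (P : ι → Prop)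
    [DecidablePred P] (h₁ : z₁ ∈ Set.Icc l u) (h₂ : z₂ ∈ Set.Icc l u) :
    (fun j => if P j then z₁ j else z₂ j) ∈ Set.Icc l u := by
  constructor <;> intro j <;> dsimp only <;> split_ifs
  exacts [h₁.1 j, h₂.1 j, h₁.2 j, h₂.2 j]

section SignStable

variable {ι κ : Type*} [Fintype ι] [DecidableEq ι]
  {μ : (ι → ℝ) → κ → ℝ} {J : (ι → ℝ) → (ι → ℝ) →L[ℝ] (κ → ℝ)}

theorem Convex.apply_le_apply_of_partial_increments_nonneg {s : Set (ι → ℝ)} (hs : Convex ℝ s)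
    (hdiff : ∀ z ∈ s, HasFDerivWithinAt μ (J z) s z) {a b : ι → ℝ} (ha : a ∈ s) (hb : b ∈ s)
    (i : κ) (h : ∀ z ∈ s, ∀ j, 0 ≤ (b j - a j) * J z (Pi.single j 1) i) :
    μ a i ≤ μ b i := by
  refine hs.le_of_hasFDerivWithinAt_nonneg (f' := fun z => (ContinuousLinearMap.proj i).comp (J z))
    (fun z hz => hasFDerivWithinAt_pi'.1 (hdiff z hz) i) ha hb fun z hz => ?_
  change 0 ≤ (J z : (ι → ℝ) →ₗ[ℝ] κ → ℝ) (b - a) i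
  rw [LinearMap.pi_apply_eq_sum_single, Finset.sum_apply]
  exact Finset.sum_nonneg fun j _ => h z hz j

theorem apply_ite_le_apply_ite_of_signStable {l u : ι → ℝ}
    (hdiff : ∀ z ∈ Set.Icc l u, HasFDerivWithinAt μ (J z) (Set.Icc l u) z)
    {σ : κ → ι → ℝ} (hσ : ∀ i j, σ i j = 1 ∨ σ i j = -1)
    (hJ : ∀ z ∈ Set.Icc l u, ∀ i j, 0 ≤ σ i j * J z (Pi.single j 1) i)
    {z₁ z₁' z₂ z₂' : ι → ℝ} (hz₁ : z₁ ∈ Set.Icc l u) (hz₁' : z₁' ∈ Set.Icc l u)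
    (hz₂ : z₂ ∈ Set.Icc l u) (hz₂' : z₂' ∈ Set.Icc l u) (h₁ : z₁ ≤ z₁') (h₂ : z₂' ≤ z₂) (i : κ) :
    μ (fun j => if σ i j = 1 then z₁ j else z₂ j) i ≤
      μ (fun j => if σ i j = 1 then z₁' j else z₂' j) i := by
  refine (convex_Icc l u).apply_le_apply_of_partial_increments_nonneg hdiff
    (Pi.ite_mem_Icc _ hz₁ hz₂) (Pi.ite_mem_Icc _ hz₁' hz₂') i fun z hz j => ?_
  have hJij := hJ z hz i j
  rcases hσ i j with hpos | hneg
  · simp only [hpos, if_true, one_mul] at hJij ⊢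
    exact mul_nonneg (sub_nonneg.2 (h₁ j)) hJij
  · have hne : σ i j ≠ 1 := by norm_num [hneg]
    simp only [hne, if_false]
    rw [hneg] at hJij
    exact mul_nonneg_of_nonpos_of_nonpos (sub_nonpos.2 (h₂ j)) (by linarith)

end SignStable

theorem jss_tight_decomposition_function_general {nz p : ℕ}
    (zls zus : Fin nz → ℝ)
    (μ : (Fin nz → ℝ) → (Fin p → ℝ))
    (J : (Fin nz → ℝ) → ((Fin nz → ℝ) →L[ℝ] (Fin p → ℝ)))
    (hdiff : ∀ z ∈ Set.Icc zls zus, HasFDerivWithinAt μ (J z) (Set.Icc zls zus) z)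
    (σ : Fin p → Fin nz → ℝ)
    (hσ : ∀ i j, σ i j = 1 ∨ σ i j = -1)
    (hJSS : ∀ z ∈ Set.Icc zls zus, ∀ (i : Fin p) (j : Fin nz),
      0 ≤ σ i j * J z (Pi.single j 1) i)
    (μd : (Fin nz → ℝ) → (Fin nz → ℝ) → (Fin p → ℝ))
    (hμd : ∀ z₁ z₂ (i : Fin p),
      μd z₁ z₂ i = μ (fun j => if σ i j = 1 then z₁ j else z₂ j) i) :
    (∀ z ∈ Set.Icc zls zus, μd z z = μ z) ∧
    (∀ z₁ z₁' z₂, z₁ ∈ Set.Icc zls zus → z₁' ∈ Set.Icc zls zus → z₂ ∈ Set.Icc zls zus →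
      z₁ ≤ z₁' → μd z₁ z₂ ≤ μd z₁' z₂) ∧
    (∀ z₁ z₂ z₂', z₁ ∈ Set.Icc zls zus → z₂ ∈ Set.Icc zls zus → z₂' ∈ Set.Icc zls zus →
      z₂ ≤ z₂' → μd z₁ z₂' ≤ μd z₁ z₂) ∧
    (∀ z zl zu, zl ∈ Set.Icc zls zus → zu ∈ Set.Icc zls zus →
      zl ≤ z → z ≤ zu → μd zl zu ≤ μ z ∧ μ z ≤ μd zu zl) := by
  have hdiag : ∀ z, μd z z = μ z := fun z => funext fun i => by simp [hμd]
  have hmono : ∀ z₁ z₁' z₂ z₂', z₁ ∈ Set.Icc zls zus → z₁' ∈ Set.Icc zls zus →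
      z₂ ∈ Set.Icc zls zus → z₂' ∈ Set.Icc zls zus → z₁ ≤ z₁' → z₂' ≤ z₂ →
      μd z₁ z₂ ≤ μd z₁' z₂' := fun _ _ _ _ hz₁ hz₁' hz₂ hz₂' h₁ h₂ i => by
    simpa only [hμd] using
      apply_ite_le_apply_ite_of_signStable hdiff hσ hJSS hz₁ hz₁' hz₂ hz₂' h₁ h₂ i
  refine ⟨fun z _ => hdiag z,
    fun _ _ _ hz₁ hz₁' hz₂ h₁ => hmono _ _ _ _ hz₁ hz₁' hz₂ hz₂ h₁ le_rfl,
    fun _ _ _ hz₁ hz₂ hz₂' h₂ => hmono _ _ _ _ hz₁ hz₁ hz₂' hz₂ le_rfl h₂, ?_⟩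
  intro z zl zu hl hu hlz hzu
  have hz : z ∈ Set.Icc zls zus := ⟨hl.1.trans hlz, hzu.trans hu.2⟩
  exact ⟨hdiag z ▸ hmono zl z zu z hl hz hu hz hlz hzu,
    hdiag z ▸ hmono z zu z zl hz hu hz hl hzu hlz⟩

/-- Tight decomposition functions for JSS mappings on a box. -/
theorem jss_tight_decomposition_function {nz p : ℕ}
    (zls zus : Fin nz → ℝ) (hbox : zls ≤ zus)
    (μ : (Fin nz → ℝ) → (Fin p → ℝ))
    (J : (Fin nz → ℝ) → ((Fin nz → ℝ) →L[ℝ] (Fin p → ℝ)))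
    (hdiff : ∀ z ∈ Set.Icc zls zus, HasFDerivWithinAt μ (J z) (Set.Icc zls zus) z)
    (σ : Fin p → Fin nz → ℝ)
    (hσ : ∀ i j, σ i j = 1 ∨ σ i j = -1)
    (hJSS : ∀ z ∈ Set.Icc zls zus, ∀ (i : Fin p) (j : Fin nz),
      0 ≤ σ i j * J z (Pi.single j 1) i)
    (μd : (Fin nz → ℝ) → (Fin nz → ℝ) → (Fin p → ℝ))
    (hμd : ∀ z₁ z₂ (i : Fin p),
      μd z₁ z₂ i = μ (fun j => if σ i j = 1 then z₁ j else z₂ j) i) :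
    (∀ z ∈ Set.Icc zls zus, μd z z = μ z) ∧
    (∀ z₁ z₁' z₂, z₁ ∈ Set.Icc zls zus → z₁' ∈ Set.Icc zls zus → z₂ ∈ Set.Icc zls zus →
      z₁ ≤ z₁' → μd z₁ z₂ ≤ μd z₁' z₂) ∧
    (∀ z₁ z₂ z₂', z₁ ∈ Set.Icc zls zus → z₂ ∈ Set.Icc zls zus → z₂' ∈ Set.Icc zls zus →
      z₂ ≤ z₂' → μd z₁ z₂' ≤ μd z₁ z₂) ∧
    (∀ z zl zu, zl ∈ Set.Icc zls zus → zu ∈ Set.Icc zls zus →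
      zl ≤ z → z ≤ zu → μd zl zu ≤ μ z ∧ μ z ≤ μd zu zl) :=
  jss_tight_decomposition_function_general zls zus μ J hdiff σ hσ hJSS μd hμd
end

section
/- Let Z = [z̲*, z̄*] ⊂ ℝ^{n_z} be a closed box and f : Z → ℝ^p differentiable with J̲_{ij} ≤ (J^f(z))_{ij} ≤ J̄_{ij} on Z. Let H ∈ ℝ^{p×n_z} with H_{ij} ∈ {J̲_{ij}, J̄_{ij}} for each (i,j), set μ(z) := f(z) − Hz, and for each i define D^i := diag over j of the indicator that H_{ij} = J̲_{ij} (equivalently, that (J̄ − H)_{ij} > 0, the coordinates on which μ_i is nondecreasing), and μ_{d,i}(z₁,z₂) := μ_i(D^i z₁ + (I − D^i) z₂). Define F̄_μ := 2·max(J̄ − H, 0) − J̲ + H (entrywise maximum with the zero matrix). Then for any z̲ ≤ z̄ with z̲, z̄ ∈ Z and ε := z̄ − z̲, it holds that μ_d(z̄,z̲) − μ_d(z̲,z̄) ≤ F̄_μ·ε. -/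
open Matrix

/-! Fix a row `i` and let `σ_j = 1` if `H i j = Jl i j` and `σ_j = -1` otherwise. The two mixed
points `D zu + (I - D) zl` and `D zl + (I - D) zu` lie in the box and differ by `σ ⊙ (zu - zl)`,
so the mean value theorem on the segment joining them writes the width of row `i` as
`((Jf z - H) (σ ⊙ (zu - zl)))_i` for some `z` in the box. Each summand is then bounded by
`Fμ i j * (zu - zl) j` using `Jl ≤ Jf z ≤ Ju` and the choice `H i j ∈ {Jl i j, Ju i j}`. -/

theorem exists_mem_segment_apply_sub_apply_eq {E ι : Type*} [NormedAddCommGroup E]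
    [NormedSpace ℝ E] [Fintype ι] {f : E → ι → ℝ} {f' : E → E →L[ℝ] ι → ℝ} {s : Set E}
    (hf : ∀ x ∈ s, HasFDerivWithinAt f (f' x) s x) (hs : Convex ℝ s) {x y : E}
    (hx : x ∈ s) (hy : y ∈ s) (i : ι) :
    ∃ z ∈ segment ℝ x y, f y i - f x i = f' z (y - x) i :=
  let π : (ι → ℝ) →L[ℝ] ℝ := ContinuousLinearMap.proj i
  domain_mvt (fun z hz => π.hasFDerivAt.comp_hasFDerivWithinAt z (hf z hz)) hs hx hy

theorem sub_mul_ite_le {jl ju j h e : ℝ} (hj : jl ≤ j ∧ j ≤ ju) (hh : h = jl ∨ h = ju)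
    (he : 0 ≤ e) :
    (j - h) * (if h = jl then e else -e) ≤ (2 * max (ju - h) 0 - jl + h) * e := by
  split_ifs with hl
  · subst hl
    rw [max_eq_left (by linarith)]
    nlinarith
  · obtain rfl := hh.resolve_left hl
    rw [max_eq_right (by linarith)]
    nlinarith

theorem jss_remainder_width_bound_general {nz p : ℕ}
    (zls zus : Fin nz → ℝ)
    (f : (Fin nz → ℝ) → (Fin p → ℝ))
    (Jf : (Fin nz → ℝ) → ((Fin nz → ℝ) →L[ℝ] (Fin p → ℝ)))
    (hdiff : ∀ z ∈ Set.Icc zls zus, HasFDerivWithinAt f (Jf z) (Set.Icc zls zus) z)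
    (Jl Ju H : Matrix (Fin p) (Fin nz) ℝ)
    (hJ : ∀ z ∈ Set.Icc zls zus, ∀ (i : Fin p) (j : Fin nz),
      Jl i j ≤ Jf z (Pi.single j 1) i ∧ Jf z (Pi.single j 1) i ≤ Ju i j)
    (hH : ∀ i j, H i j = Jl i j ∨ H i j = Ju i j)
    (μ : (Fin nz → ℝ) → (Fin p → ℝ))
    (hμ : ∀ z, μ z = f z - H.mulVec z)
    (μd : (Fin nz → ℝ) → (Fin nz → ℝ) → (Fin p → ℝ))
    (hμd : ∀ z₁ z₂ (i : Fin p),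
      μd z₁ z₂ i = μ (fun j => if H i j = Jl i j then z₁ j else z₂ j) i)
    (Fμ : Matrix (Fin p) (Fin nz) ℝ)
    (hFμ : ∀ i j, Fμ i j = 2 * max (Ju i j - H i j) 0 - Jl i j + H i j) :
    ∀ zl zu, zl ∈ Set.Icc zls zus → zu ∈ Set.Icc zls zus → zl ≤ zu →
      μd zu zl - μd zl zu ≤ Fμ.mulVec (zu - zl) := by
  intro zl zu hzl hzu hle i
  set mix : (Fin nz → ℝ) → (Fin nz → ℝ) → Fin nz → ℝ :=
    fun z₁ z₂ j => if H i j = Jl i j then z₁ j else z₂ j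
  have hmix {x y} (hx : x ∈ Set.Icc zls zus) (hy : y ∈ Set.Icc zls zus) :
      mix x y ∈ Set.Icc zls zus :=
    Set.piecewise_mem_Icc' (s := {j | H i j = Jl i j}) hx hy
  obtain ⟨z, hz, hmvt⟩ := exists_mem_segment_apply_sub_apply_eq hdiff (convex_Icc zls zus)
    (hmix hzl hzu) (hmix hzu hzl) i
  have hzbox := (convex_Icc zls zus).segment_subset (hmix hzl hzu) (hmix hzu hzl) hz
  have hdir : mix zu zl - mix zl zu =
      fun j => if H i j = Jl i j then (zu - zl) j else -(zu - zl) j := by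
    ext j
    simp only [mix, Pi.sub_apply]
    split_ifs <;> ring
  calc (μd zu zl - μd zl zu) i
      = ((LinearMap.toMatrix' (Jf z : (Fin nz → ℝ) →ₗ[ℝ] Fin p → ℝ) - H) *ᵥ
          (mix zu zl - mix zl zu)) i := by
        rw [sub_mulVec, LinearMap.toMatrix'_mulVec, ContinuousLinearMap.coe_coe, Pi.sub_apply,
          Pi.sub_apply, ← hmvt, hμd, hμd, hμ, hμ, mulVec_sub]
        simp only [Pi.sub_apply, mix]
        ring
    _ ≤ (Fμ *ᵥ (zu - zl)) i := by
        rw [hdir]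
        simp only [mulVec, dotProduct]
        refine Finset.sum_le_sum fun j _ => ?_
        rw [Matrix.sub_apply, LinearMap.toMatrix'_apply, hFμ]
        exact sub_mul_ite_le (hJ z hzbox i j) (hH i j) (sub_nonneg.2 (hle j))

/-- Bound on the width of the tight decomposition function of the
JSS remainder `μ(z) = f(z) − Hz`. -/
theorem jss_remainder_width_bound {nz p : ℕ}
    (zls zus : Fin nz → ℝ) (hbox : zls ≤ zus)
    (f : (Fin nz → ℝ) → (Fin p → ℝ))
    (Jf : (Fin nz → ℝ) → ((Fin nz → ℝ) →L[ℝ] (Fin p → ℝ)))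
    (hdiff : ∀ z ∈ Set.Icc zls zus, HasFDerivWithinAt f (Jf z) (Set.Icc zls zus) z)
    (Jl Ju H : Matrix (Fin p) (Fin nz) ℝ)
    (hJ : ∀ z ∈ Set.Icc zls zus, ∀ (i : Fin p) (j : Fin nz),
      Jl i j ≤ Jf z (Pi.single j 1) i ∧ Jf z (Pi.single j 1) i ≤ Ju i j)
    (hH : ∀ i j, H i j = Jl i j ∨ H i j = Ju i j)
    (μ : (Fin nz → ℝ) → (Fin p → ℝ))
    (hμ : ∀ z, μ z = f z - H.mulVec z)
    (μd : (Fin nz → ℝ) → (Fin nz → ℝ) → (Fin p → ℝ))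
    (hμd : ∀ z₁ z₂ (i : Fin p),
      μd z₁ z₂ i = μ (fun j => if H i j = Jl i j then z₁ j else z₂ j) i)
    (Fμ : Matrix (Fin p) (Fin nz) ℝ)
    (hFμ : ∀ i j, Fμ i j = 2 * max (Ju i j - H i j) 0 - Jl i j + H i j) :
    ∀ zl zu, zl ∈ Set.Icc zls zus → zu ∈ Set.Icc zls zus → zl ≤ zu →
      μd zu zl - μd zl zu ≤ Fμ.mulVec (zu - zl) :=
  jss_remainder_width_bound_general zls zus f Jf hdiff Jl Ju H hJ hH μ hμ μd hμd Fμ hFμ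
end

section
/- Let g : ℝⁿ → ℝⁿ and g_d : ℝⁿ × ℝⁿ → ℝⁿ satisfy: (i) g_d(x,x) = g(x) for all x; (ii) g_d is monotone nondecreasing in its first argument (x̂ ≥ x implies g_d(x̂,x′) ≥ g_d(x,x′)); (iii) g_d is monotone nonincreasing in its second argument (x̂ ≥ x implies g_d(x′,x̂) ≤ g_d(x′,x)). Let sequences (x_k), (x̲_k), (x̄_k) in ℝⁿ satisfy x_{k+1} = g(x_k), x̲_{k+1} = g_d(x̲_k, x̄_k), x̄_{k+1} = g_d(x̄_k, x̲_k), with x̲₀ ≤ x₀ ≤ x̄₀. Then for all k ∈ ℕ, x̲_k ≤ x_k ≤ x̄_k (the embedding system has the state framer property). -/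
/-- State framer property of the embedding system associated with a
mixed-monotone decomposition function. -/
theorem embedding_system_framer_property {n : ℕ}
    (g : (Fin n → ℝ) → (Fin n → ℝ))
    (gd : (Fin n → ℝ) → (Fin n → ℝ) → (Fin n → ℝ))
    (hdiag : ∀ x, gd x x = g x)
    (hmono₁ : ∀ x x' y, x ≤ x' → gd x y ≤ gd x' y)
    (hmono₂ : ∀ y y' x, y ≤ y' → gd x y' ≤ gd x y)
    (x xlo xhi : ℕ → Fin n → ℝ)
    (hx : ∀ k, x (k + 1) = g (x k))
    (hlo : ∀ k, xlo (k + 1) = gd (xlo k) (xhi k))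
    (hhi : ∀ k, xhi (k + 1) = gd (xhi k) (xlo k))
    (h0 : xlo 0 ≤ x 0 ∧ x 0 ≤ xhi 0) :
    ∀ k, xlo k ≤ x k ∧ x k ≤ xhi k := by
  intro k
  induction k with
  | zero => exact h0
  | succ k ih =>
    obtain ⟨ih1, ih2⟩ := ih
    rw [hx, hlo, hhi, ← hdiag]
    constructor
    · exact le_trans (hmono₂ (x k) (xhi k) (xlo k) ih2)
        (hmono₁ (xlo k) (x k) (x k) ih1)
    · exact le_trans (hmono₁ (x k) (xhi k) (x k) ih2)
        (hmono₂ (xlo k) (x k) (xhi k) ih1)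
end

section
/- Under the system setting, let x ∈ ℝⁿ, w ∈ ℝ^{n_w}, v ∈ ℝ^{n_v}, d₁ ∈ ℝ^{p₁}, d₂ ∈ ℝ^{p₂} be arbitrary and set x⁺ := f(x) + Ww + G₁d₁ + G₂d₂ and z₁ := h₁(x) + V₁v + Ξd₁. Then (I − NC₂)G₂ = 0, and the auxiliary state ξ := (I − NC₂)x satisfies ξ⁺ := (I − NC₂)x⁺ = (I − NC₂)(f(x) + G₁S(z₁ − h₁(x) − V₁v) + Ww); in particular ξ⁺ does not depend on the unknown inputs d₁, d₂. -/
open Matrix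

/-- Lemma 1: With `N = G₂M₂`, the auxiliary state `ξ = (I − NC₂)x`
evolves independently of the unknown inputs `d₁, d₂`. -/
theorem auxiliary_state_unknown_input_decoupling
    {n nw nv p1 p2 l2 : ℕ}
    (f : (Fin n → ℝ) → (Fin n → ℝ)) (h1 : (Fin n → ℝ) → (Fin p1 → ℝ))
    (W : Matrix (Fin n) (Fin nw) ℝ) (G1 : Matrix (Fin n) (Fin p1) ℝ)
    (G2 : Matrix (Fin n) (Fin p2) ℝ) (V1 : Matrix (Fin p1) (Fin nv) ℝ)
    (C2 : Matrix (Fin l2) (Fin n) ℝ)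
    (Ξ S : Matrix (Fin p1) (Fin p1) ℝ) (hSΞ : S * Ξ = 1) (hΞS : Ξ * S = 1)
    (M2 : Matrix (Fin p2) (Fin l2) ℝ) (hM2 : M2 * (C2 * G2) = 1)
    (N : Matrix (Fin n) (Fin l2) ℝ) (hN : N = G2 * M2)
    (x : Fin n → ℝ) (w : Fin nw → ℝ) (v : Fin nv → ℝ)
    (d1 : Fin p1 → ℝ) (d2 : Fin p2 → ℝ)
    (xp : Fin n → ℝ)
    (hxp : xp = f x + W.mulVec w + G1.mulVec d1 + G2.mulVec d2)
    (z1 : Fin p1 → ℝ)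
    (hz1 : z1 = h1 x + V1.mulVec v + Ξ.mulVec d1) :
    (1 - N * C2) * G2 = 0 ∧
    (1 - N * C2).mulVec xp =
      (1 - N * C2).mulVec
        (f x + G1.mulVec (S.mulVec (z1 - h1 x - V1.mulVec v)) + W.mulVec w) := by

  have hG2 : (1 - N * C2) * G2 = 0 := by
    rw [hN, Matrix.sub_mul, Matrix.one_mul, Matrix.mul_assoc, Matrix.mul_assoc, hM2]
    simp
  refine ⟨hG2, ?_⟩
  have hz : z1 - h1 x - V1.mulVec v = Ξ.mulVec d1 := by
    rw [hz1]; abel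
  rw [hz, hxp, Matrix.mulVec_mulVec, Matrix.mulVec_mulVec, Matrix.mul_assoc, hSΞ, Matrix.mul_one]
  have h0 : (1 - N * C2).mulVec (G2.mulVec d2) = 0 := by
    rw [Matrix.mulVec_mulVec, hG2, Matrix.zero_mulVec]
  simp only [Matrix.mulVec_add]
  rw [h0]
  abel
end

section
/- Under the system, auxiliary and observer-matrix settings, let x ∈ ℝⁿ, w ∈ ℝ^{n_w}, v ∈ ℝ^{n_v}, d₁ ∈ ℝ^{p₁}, d₂ ∈ ℝ^{p₂} be arbitrary, and set x⁺ := f(x) + Ww + G₁d₁ + G₂d₂, z₁ := h₁(x) + V₁v + Ξd₁, z₂ := C₂x + ψ₂(x) + V₂v, γ := Λ(I − NC₂)x, γ⁺ := Λ(I − NC₂)x⁺, and ẑ := Λ(I−NC₂)G₁S z₁ + (L + (A−LC₂)ΛN) z₂. Then γ⁺ = (A − LC₂)γ + ρ(x) − Lψ₂(x) − V̂v + Ŵw − D·ε(x) + ẑ. -/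
open Matrix

/-- Dynamics of the auxiliary state `γ = Λ(I − NC₂)x` in
observer form, with the attack-free output injection terms. -/
theorem auxiliary_state_observer_dynamics
    {n nw nv p1 p2 l2 : ℕ}
    (f : (Fin n → ℝ) → (Fin n → ℝ)) (h1 : (Fin n → ℝ) → (Fin p1 → ℝ))
    (ψ2 : (Fin n → ℝ) → (Fin l2 → ℝ))
    (W : Matrix (Fin n) (Fin nw) ℝ) (G1 : Matrix (Fin n) (Fin p1) ℝ)
    (G2 : Matrix (Fin n) (Fin p2) ℝ) (V1 : Matrix (Fin p1) (Fin nv) ℝ)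
    (V2 : Matrix (Fin l2) (Fin nv) ℝ) (C2 : Matrix (Fin l2) (Fin n) ℝ)
    (Ξ S : Matrix (Fin p1) (Fin p1) ℝ) (hSΞ : S * Ξ = 1) (hΞS : Ξ * S = 1)
    (M2 : Matrix (Fin p2) (Fin l2) ℝ) (hM2 : M2 * (C2 * G2) = 1)
    (N : Matrix (Fin n) (Fin l2) ℝ) (hN : N = G2 * M2)
    (Ag Λ : Matrix (Fin n) (Fin n) ℝ) (hΛAg : Λ * Ag = 1) (hAgΛ : Ag * Λ = 1)
    (ε : (Fin n → ℝ) → (Fin n → ℝ))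
    (hε : ∀ y, ε y = y + N.mulVec (ψ2 y) - Ag.mulVec y)
    (A : Matrix (Fin n) (Fin n) ℝ)
    (ρ : (Fin n → ℝ) → (Fin n → ℝ))
    (hρ : ∀ y, ρ y =
      Λ.mulVec ((1 - N * C2).mulVec (f y - G1.mulVec (S.mulVec (h1 y)))) - A.mulVec y)
    (L : Matrix (Fin n) (Fin l2) ℝ)
    (Vhat : Matrix (Fin n) (Fin nv) ℝ)
    (hVhat : Vhat = (A - L * C2) * Λ * N * V2 + L * V2 + Λ * (1 - N * C2) * G1 * S * V1)
    (D : Matrix (Fin n) (Fin n) ℝ) (hD : D = (A - L * C2) * Λ)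
    (What : Matrix (Fin n) (Fin nw) ℝ) (hWhat : What = Λ * (1 - N * C2) * W)
    (x : Fin n → ℝ) (w : Fin nw → ℝ) (v : Fin nv → ℝ)
    (d1 : Fin p1 → ℝ) (d2 : Fin p2 → ℝ)
    (xp : Fin n → ℝ)
    (hxp : xp = f x + W.mulVec w + G1.mulVec d1 + G2.mulVec d2)
    (z1 : Fin p1 → ℝ) (hz1 : z1 = h1 x + V1.mulVec v + Ξ.mulVec d1)
    (z2 : Fin l2 → ℝ) (hz2 : z2 = C2.mulVec x + ψ2 x + V2.mulVec v)
    (γ γp : Fin n → ℝ)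
    (hγ : γ = Λ.mulVec ((1 - N * C2).mulVec x))
    (hγp : γp = Λ.mulVec ((1 - N * C2).mulVec xp))
    (zhat : Fin n → ℝ)
    (hzhat : zhat = (Λ * (1 - N * C2) * G1 * S).mulVec z1 +
      (L + (A - L * C2) * Λ * N).mulVec z2) :
    γp = (A - L * C2).mulVec γ + ρ x - L.mulVec (ψ2 x) - Vhat.mulVec v +
      What.mulVec w - D.mulVec (ε x) + zhat := by
  subst hxp hz1 hz2 hγ hγp hzhat hVhat hD hWhat hN
  rw [hρ, hε]
  simp only [Matrix.mulVec_add, Matrix.mulVec_sub, Matrix.add_mulVec,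
    Matrix.sub_mulVec, Matrix.mulVec_mulVec, Matrix.one_mulVec, Matrix.mul_assoc,
    Matrix.sub_mul, Matrix.mul_sub, Matrix.add_mul, Matrix.mul_add,
    Matrix.one_mul, Matrix.mul_one, hSΞ, hΛAg, hM2]
  abel
end

section
/- Under the system, auxiliary and observer-matrix settings, suppose sequences x_k, w_k, v_k, d_{1,k}, d_{2,k} satisfy x_{k+1} = f(x_k) + Ww_k + G₁d_{1,k} + G₂d_{2,k}, z_{1,k} = h₁(x_k) + V₁v_k + Ξd_{1,k}, z_{2,k} = C₂x_k + ψ₂(x_k) + V₂v_k, with w̲ ≤ w_k ≤ w̄, v̲ ≤ v_k ≤ v̄ and ε̲ ≤ ε(x_k) ≤ ε̄ for all k ∈ ℕ. Assume ρ_d and ψ_{2,d} satisfy the framer property: whenever x̲ ≤ x ≤ x̄, ρ_d(x̲,x̄) ≤ ρ(x) ≤ ρ_d(x̄,x̲) and ψ_{2,d}(x̲,x̄) ≤ ψ₂(x) ≤ ψ_{2,d}(x̄,x̲). Define ẑ_k := Λ(I−NC₂)G₁S z_{1,k} + (L + (A−LC₂)ΛN) z_{2,k}, and sequences by: γ̲_{k+1}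 = (A−LC₂)⁺γ̲_k − (A−LC₂)⁻γ̄_k + ρ_d(x̲_k,x̄_k) + D⁻ε̲ − D⁺ε̄ + L⁻ψ_{2,d}(x̲_k,x̄_k) − L⁺ψ_{2,d}(x̄_k,x̲_k) + V̂⁻v̲ − V̂⁺v̄ + Ŵ⁺w̲ − Ŵ⁻w̄ + ẑ_k; γ̄_{k+1} = (A−LC₂)⁺γ̄_k − (A−LC₂)⁻γ̲_k + ρ_d(x̄_k,x̲_k) + D⁻ε̄ − D⁺ε̲ + L⁻ψ_{2,d}(x̄_k,x̲_k) − L⁺ψ_{2,d}(x̲_k,x̄_k) + V̂⁻v̄ − V̂⁺v̲ + Ŵ⁺w̄ − Ŵ⁻w̲ + ẑ_k; x̲_k = γ̲_k + ΛN z_{2,k} + Λ⁻ε̲ − Λ⁺ε̄ + (ΛNV₂)⁻v̲ − (ΛNV₂)⁺v̄; x̄_k = γ̄_k + ΛN z_{2,k} + Λ⁻ε̄ − Λ⁺ε̲ + (ΛNV₂)⁻v̄ − (ΛNV₂)⁺v̲. If γ̲₀ ≤ Λ(I−NC₂)x₀ ≤ γ̄₀, then for all k ∈ ℕ: γ̲_k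 ≤ Λ(I−NC₂)x_k ≤ γ̄_k and x̲_k ≤ x_k ≤ x̄_k (the state framer property). -/
open Matrix

/-- Entrywise nonnegative part `M⁺ = max(M, 0)` of a real matrix. -/
noncomputable def matPos {m n : ℕ} (M : Matrix (Fin m) (Fin n) ℝ) : Matrix (Fin m) (Fin n) ℝ :=
  Matrix.of fun i j => max (M i j) 0

/-- Entrywise `M⁻ = M⁺ − M`. -/
noncomputable def matNeg {m n : ℕ} (M : Matrix (Fin m) (Fin n) ℝ) : Matrix (Fin m) (Fin n) ℝ :=
  matPos M - M

lemma mulVec_mono' {m n : ℕ} {M : Matrix (Fin m) (Fin n) ℝ} (hM : ∀ i j, 0 ≤ M i j)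
    {a b : Fin n → ℝ} (h : a ≤ b) : M.mulVec a ≤ M.mulVec b := by
  intro i
  simp only [Matrix.mulVec, dotProduct]
  exact Finset.sum_le_sum fun j _ => mul_le_mul_of_nonneg_left (h j) (hM i j)

lemma matPos_entry_nonneg {m n : ℕ} (M : Matrix (Fin m) (Fin n) ℝ) (i j) :
    0 ≤ matPos M i j := le_max_right _ _

lemma matNeg_entry_nonneg {m n : ℕ} (M : Matrix (Fin m) (Fin n) ℝ) (i j) :
    0 ≤ matNeg M i j := by
  simp only [matNeg, Matrix.sub_apply, matPos, Matrix.of_apply, sub_nonneg]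
  exact le_max_left _ _

lemma matPos_sub_matNeg {m n : ℕ} (M : Matrix (Fin m) (Fin n) ℝ) :
    matPos M - matNeg M = M := by simp [matNeg]

/-- Interval bounds for `M *ᵥ b` given `a ≤ b ≤ c`. -/
lemma mulVec_bounds {m n : ℕ} (M : Matrix (Fin m) (Fin n) ℝ) {a b c : Fin n → ℝ}
    (hab : a ≤ b) (hbc : b ≤ c) :
    (matPos M).mulVec a - (matNeg M).mulVec c ≤ M.mulVec b ∧
      M.mulVec b ≤ (matPos M).mulVec c - (matNeg M).mulVec a := by
  have hMeq : M.mulVec b = (matPos M).mulVec b - (matNeg M).mulVec b := by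
    rw [← Matrix.sub_mulVec, matPos_sub_matNeg]
  constructor <;> rw [hMeq]
  · exact sub_le_sub (mulVec_mono' (matPos_entry_nonneg M) hab)
      (mulVec_mono' (matNeg_entry_nonneg M) hbc)
  · exact sub_le_sub (mulVec_mono' (matPos_entry_nonneg M) hbc)
      (mulVec_mono' (matNeg_entry_nonneg M) hab)

/-- Interval bounds for `-(M *ᵥ b)` given `a ≤ b ≤ c`. -/
lemma neg_mulVec_bounds {m n : ℕ} (M : Matrix (Fin m) (Fin n) ℝ) {a b c : Fin n → ℝ}
    (hab : a ≤ b) (hbc : b ≤ c) :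
    (matNeg M).mulVec a - (matPos M).mulVec c ≤ -(M.mulVec b) ∧
      -(M.mulVec b) ≤ (matNeg M).mulVec c - (matPos M).mulVec a := by
  obtain ⟨h1, h2⟩ := mulVec_bounds M hab hbc
  constructor
  · have := neg_le_neg h2; rwa [neg_sub] at this
  · have := neg_le_neg h1; rwa [neg_sub] at this

/-- Theorem 1, state framer property: the proposed resilient interval
framer recursion yields `γ̲_k ≤ Λ(I−NC₂)x_k ≤ γ̄_k` and `x̲_k ≤ x_k ≤ x̄_k` for all `k`. -/
theorem resilient_interval_framer_correctness
    {n nw nv p1 p2 l2 : ℕ}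
    (f : (Fin n → ℝ) → (Fin n → ℝ)) (h1 : (Fin n → ℝ) → (Fin p1 → ℝ))
    (ψ2 : (Fin n → ℝ) → (Fin l2 → ℝ))
    (W : Matrix (Fin n) (Fin nw) ℝ) (G1 : Matrix (Fin n) (Fin p1) ℝ)
    (G2 : Matrix (Fin n) (Fin p2) ℝ) (V1 : Matrix (Fin p1) (Fin nv) ℝ)
    (V2 : Matrix (Fin l2) (Fin nv) ℝ) (C2 : Matrix (Fin l2) (Fin n) ℝ)
    (Ξ S : Matrix (Fin p1) (Fin p1) ℝ) (hSΞ : S * Ξ = 1) (hΞS : Ξ * S = 1)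
    (M2 : Matrix (Fin p2) (Fin l2) ℝ) (hM2 : M2 * (C2 * G2) = 1)
    (N : Matrix (Fin n) (Fin l2) ℝ) (hN : N = G2 * M2)
    (Ag Λ : Matrix (Fin n) (Fin n) ℝ) (hΛAg : Λ * Ag = 1) (hAgΛ : Ag * Λ = 1)
    (ε : (Fin n → ℝ) → (Fin n → ℝ))
    (hε : ∀ y, ε y = y + N.mulVec (ψ2 y) - Ag.mulVec y)
    (A : Matrix (Fin n) (Fin n) ℝ)
    (ρ : (Fin n → ℝ) → (Fin n → ℝ))
    (hρ : ∀ y, ρ y =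
      Λ.mulVec ((1 - N * C2).mulVec (f y - G1.mulVec (S.mulVec (h1 y)))) - A.mulVec y)
    (L : Matrix (Fin n) (Fin l2) ℝ)
    (Vhat : Matrix (Fin n) (Fin nv) ℝ)
    (hVhat : Vhat = (A - L * C2) * Λ * N * V2 + L * V2 + Λ * (1 - N * C2) * G1 * S * V1)
    (D : Matrix (Fin n) (Fin n) ℝ) (hD : D = (A - L * C2) * Λ)
    (What : Matrix (Fin n) (Fin nw) ℝ) (hWhat : What = Λ * (1 - N * C2) * W)
    -- system trajectories
    (x : ℕ → Fin n → ℝ) (w : ℕ → Fin nw → ℝ) (v : ℕ → Fin nv → ℝ)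
    (d1 : ℕ → Fin p1 → ℝ) (d2 : ℕ → Fin p2 → ℝ)
    (z1 : ℕ → Fin p1 → ℝ) (z2 : ℕ → Fin l2 → ℝ)
    (hdyn : ∀ k, x (k + 1) =
      f (x k) + W.mulVec (w k) + G1.mulVec (d1 k) + G2.mulVec (d2 k))
    (hz1 : ∀ k, z1 k = h1 (x k) + V1.mulVec (v k) + Ξ.mulVec (d1 k))
    (hz2 : ∀ k, z2 k = C2.mulVec (x k) + ψ2 (x k) + V2.mulVec (v k))
    -- noise and approximation-error bounds
    (wl wu : Fin nw → ℝ) (vl vu : Fin nv → ℝ) (εl εu : Fin n → ℝ)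
    (hw : ∀ k, wl ≤ w k ∧ w k ≤ wu)
    (hv : ∀ k, vl ≤ v k ∧ v k ≤ vu)
    (hεb : ∀ k, εl ≤ ε (x k) ∧ ε (x k) ≤ εu)
    -- decomposition functions with the framer property
    (ρd : (Fin n → ℝ) → (Fin n → ℝ) → (Fin n → ℝ))
    (ψ2d : (Fin n → ℝ) → (Fin n → ℝ) → (Fin l2 → ℝ))
    (hρd : ∀ xl y xu, xl ≤ y → y ≤ xu → ρd xl xu ≤ ρ y ∧ ρ y ≤ ρd xu xl)
    (hψ2d : ∀ xl y xu, xl ≤ y → y ≤ xu → ψ2d xl xu ≤ ψ2 y ∧ ψ2 y ≤ ψ2d xu xl)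
    -- the observer recursion
    (zhat : ℕ → Fin n → ℝ)
    (hzhat : ∀ k, zhat k = (Λ * (1 - N * C2) * G1 * S).mulVec (z1 k) +
      (L + (A - L * C2) * Λ * N).mulVec (z2 k))
    (γlo γhi xlo xhi : ℕ → Fin n → ℝ)
    (hγlo : ∀ k, γlo (k + 1) =
      (matPos (A - L * C2)).mulVec (γlo k) - (matNeg (A - L * C2)).mulVec (γhi k) +
      ρd (xlo k) (xhi k) +
      (matNeg D).mulVec εl - (matPos D).mulVec εu +
      (matNeg L).mulVec (ψ2d (xlo k) (xhi k)) - (matPos L).mulVec (ψ2d (xhi k) (xlo k)) +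
      (matNeg Vhat).mulVec vl - (matPos Vhat).mulVec vu +
      (matPos What).mulVec wl - (matNeg What).mulVec wu + zhat k)
    (hγhi : ∀ k, γhi (k + 1) =
      (matPos (A - L * C2)).mulVec (γhi k) - (matNeg (A - L * C2)).mulVec (γlo k) +
      ρd (xhi k) (xlo k) +
      (matNeg D).mulVec εu - (matPos D).mulVec εl +
      (matNeg L).mulVec (ψ2d (xhi k) (xlo k)) - (matPos L).mulVec (ψ2d (xlo k) (xhi k)) +
      (matNeg Vhat).mulVec vu - (matPos Vhat).mulVec vl +
      (matPos What).mulVec wu - (matNeg What).mulVec wl + zhat k)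
    (hxlo : ∀ k, xlo k = γlo k + (Λ * N).mulVec (z2 k) +
      (matNeg Λ).mulVec εl - (matPos Λ).mulVec εu +
      (matNeg (Λ * N * V2)).mulVec vl - (matPos (Λ * N * V2)).mulVec vu)
    (hxhi : ∀ k, xhi k = γhi k + (Λ * N).mulVec (z2 k) +
      (matNeg Λ).mulVec εu - (matPos Λ).mulVec εl +
      (matNeg (Λ * N * V2)).mulVec vu - (matPos (Λ * N * V2)).mulVec vl)
    (h0 : γlo 0 ≤ (Λ * (1 - N * C2)).mulVec (x 0) ∧
      (Λ * (1 - N * C2)).mulVec (x 0) ≤ γhi 0) :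
    ∀ k, (γlo k ≤ (Λ * (1 - N * C2)).mulVec (x k) ∧
      (Λ * (1 - N * C2)).mulVec (x k) ≤ γhi k) ∧
      (xlo k ≤ x k ∧ x k ≤ xhi k) := by
    classical
  have hΛAg' : ∀ u : Fin n → ℝ, Λ.mulVec (Ag.mulVec u) = u := by
    intro u; rw [Matrix.mulVec_mulVec, hΛAg, Matrix.one_mulVec]
  have hSΞ' : ∀ u : Fin p1 → ℝ, S.mulVec (Ξ.mulVec u) = u := by
    intro u; rw [Matrix.mulVec_mulVec, hSΞ, Matrix.one_mulVec]
  have hM2' : ∀ u : Fin p2 → ℝ, M2.mulVec (C2.mulVec (G2.mulVec u)) = u := by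
    intro u
    rw [Matrix.mulVec_mulVec, Matrix.mulVec_mulVec, Matrix.mul_assoc, hM2,
      Matrix.one_mulVec]
  -- Key identity (a): recovering the state from γ and the measurement
  have keyA : ∀ k, x k = (Λ * (1 - N * C2)).mulVec (x k) + (Λ * N).mulVec (z2 k)
      - Λ.mulVec (ε (x k)) - (Λ * N * V2).mulVec (v k) := by
    intro k
    rw [hz2 k, hε (x k)]
    simp only [← Matrix.mulVec_mulVec, Matrix.sub_mulVec, Matrix.add_mulVec,
      Matrix.mulVec_sub, Matrix.mulVec_add, Matrix.one_mulVec, hΛAg']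
    abel
  -- Key identity (b): the dynamics of γ
  have keyB : ∀ k, (Λ * (1 - N * C2)).mulVec (x (k + 1)) =
      (A - L * C2).mulVec ((Λ * (1 - N * C2)).mulVec (x k)) + ρ (x k)
      - D.mulVec (ε (x k)) - L.mulVec (ψ2 (x k)) - Vhat.mulVec (v k)
      + What.mulVec (w k) + zhat k := by
    intro k
    rw [hdyn k, hzhat k, hz1 k, hz2 k, hρ (x k), hε (x k), hD, hVhat, hWhat]
    simp only [hN, ← Matrix.mulVec_mulVec, Matrix.sub_mulVec, Matrix.add_mulVec,
      Matrix.mulVec_sub, Matrix.mulVec_add, Matrix.one_mulVec, hΛAg', hSΞ', hM2']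
    abel
  -- From γ-bounds at time k, derive state bounds at time k
  have xb : ∀ k, γlo k ≤ (Λ * (1 - N * C2)).mulVec (x k) →
      (Λ * (1 - N * C2)).mulVec (x k) ≤ γhi k → xlo k ≤ x k ∧ x k ≤ xhi k := by
    intro k hl hu
    obtain ⟨he1, he2⟩ := hεb k
    obtain ⟨hv1, hv2⟩ := hv k
    have eB := neg_mulVec_bounds Λ he1 he2
    have vB := neg_mulVec_bounds (Λ * N * V2) hv1 hv2
    constructor
    · have step1 : xlo k = γlo k + (Λ * N).mulVec (z2 k)
            + ((matNeg Λ).mulVec εl - (matPos Λ).mulVec εu)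
            + ((matNeg (Λ * N * V2)).mulVec vl - (matPos (Λ * N * V2)).mulVec vu) := by
        rw [hxlo k]; abel
      have step3 : x k = (Λ * (1 - N * C2)).mulVec (x k) + (Λ * N).mulVec (z2 k)
            + (-(Λ.mulVec (ε (x k)))) + (-((Λ * N * V2).mulVec (v k))) := by
        conv_lhs => rw [keyA k]
        abel
      rw [step1, step3]
      exact add_le_add (add_le_add (add_le_add hl le_rfl) eB.1) vB.1
    · have step1 : x k = (Λ * (1 - N * C2)).mulVec (x k) + (Λ * N).mulVec (z2 k)
            + (-(Λ.mulVec (ε (x k)))) + (-((Λ * N * V2).mulVec (v k))) := by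
        conv_lhs => rw [keyA k]
        abel
      have step3 : xhi k = γhi k + (Λ * N).mulVec (z2 k)
            + ((matNeg Λ).mulVec εu - (matPos Λ).mulVec εl)
            + ((matNeg (Λ * N * V2)).mulVec vu - (matPos (Λ * N * V2)).mulVec vl) := by
        rw [hxhi k]; abel
      rw [step1, step3]
      exact add_le_add (add_le_add (add_le_add hu le_rfl) eB.2) vB.2
  -- Main induction on the γ-framer
  have main : ∀ k, γlo k ≤ (Λ * (1 - N * C2)).mulVec (x k) ∧
      (Λ * (1 - N * C2)).mulVec (x k) ≤ γhi k := by
    intro k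
    induction k with
    | zero => exact h0
    | succ k ih =>
      obtain ⟨ihl, ihu⟩ := ih
      have hxbk := xb k ihl ihu
      obtain ⟨he1, he2⟩ := hεb k
      obtain ⟨hv1, hv2⟩ := hv k
      obtain ⟨hw1, hw2⟩ := hw k
      have t1 := mulVec_bounds (A - L * C2) ihl ihu
      have t2 := hρd (xlo k) (x k) (xhi k) hxbk.1 hxbk.2
      have t3 := neg_mulVec_bounds D he1 he2
      have ψB := hψ2d (xlo k) (x k) (xhi k) hxbk.1 hxbk.2
      have t4 := neg_mulVec_bounds L ψB.1 ψB.2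
      have t5 := neg_mulVec_bounds Vhat hv1 hv2
      have t6 := mulVec_bounds What hw1 hw2
      constructor
      · have step1 : γlo (k + 1) =
            ((matPos (A - L * C2)).mulVec (γlo k) - (matNeg (A - L * C2)).mulVec (γhi k))
              + ρd (xlo k) (xhi k)
              + ((matNeg D).mulVec εl - (matPos D).mulVec εu)
              + ((matNeg L).mulVec (ψ2d (xlo k) (xhi k))
                  - (matPos L).mulVec (ψ2d (xhi k) (xlo k)))
              + ((matNeg Vhat).mulVec vl - (matPos Vhat).mulVec vu)
              + ((matPos What).mulVec wl - (matNeg What).mulVec wu)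
              + zhat k := by rw [hγlo k]; abel
        have step3 : (Λ * (1 - N * C2)).mulVec (x (k + 1)) =
            (A - L * C2).mulVec ((Λ * (1 - N * C2)).mulVec (x k)) + ρ (x k)
              + (-(D.mulVec (ε (x k)))) + (-(L.mulVec (ψ2 (x k))))
              + (-(Vhat.mulVec (v k))) + What.mulVec (w k) + zhat k := by
          rw [keyB k]; abel
        rw [step1, step3]
        exact add_le_add (add_le_add (add_le_add (add_le_add (add_le_add
          (add_le_add t1.1 t2.1) t3.1) t4.1) t5.1) t6.1) le_rfl
      · have step1 : (Λ * (1 - N * C2)).mulVec (x (k + 1)) =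
            (A - L * C2).mulVec ((Λ * (1 - N * C2)).mulVec (x k)) + ρ (x k)
              + (-(D.mulVec (ε (x k)))) + (-(L.mulVec (ψ2 (x k))))
              + (-(Vhat.mulVec (v k))) + What.mulVec (w k) + zhat k := by
          rw [keyB k]; abel
        have step3 : γhi (k + 1) =
            ((matPos (A - L * C2)).mulVec (γhi k) - (matNeg (A - L * C2)).mulVec (γlo k))
              + ρd (xhi k) (xlo k)
              + ((matNeg D).mulVec εu - (matPos D).mulVec εl)
              + ((matNeg L).mulVec (ψ2d (xhi k) (xlo k))
                  - (matPos L).mulVec (ψ2d (xlo k) (xhi k)))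
              + ((matNeg Vhat).mulVec vu - (matPos Vhat).mulVec vl)
              + ((matPos What).mulVec wu - (matNeg What).mulVec wl)
              + zhat k := by rw [hγhi k]; abel
        rw [step1, step3]
        exact add_le_add (add_le_add (add_le_add (add_le_add (add_le_add
          (add_le_add t1.2 t2.2) t3.2) t4.2) t5.2) t6.2) le_rfl
  intro k
  exact ⟨main k, xb k (main k).1 (main k).2⟩
end

section
/- Under the system setting, let E₁ ∈ ℝ^{p×p₁}, E₂ ∈ ℝ^{p×p₂}, and define Φ := E₂M₂C₂, κ(x) := (ΦG₁ − E₁)S h₁(x) − Φ f(x), A_v := (ΦG₁ − E₁)SV₁, A_z := (E₁ − ΦG₁)S. Let x ∈ ℝⁿ, w ∈ ℝ^{n_w}, v ∈ ℝ^{n_v}, d₁ ∈ ℝ^{p₁}, d₂ ∈ ℝ^{p₂} be arbitrary, set x⁺ := f(x) + Ww + G₁d₁ + G₂d₂, z₁ := h₁(x) + V₁v + Ξd₁, and let the combined unknown input be d := E₁d₁ + E₂d₂. Then d = Φx⁺ + κ(x) + A_z z₁ + A_v v − ΦWw. -/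
open Matrix

/-- Exact expression of the combined unknown input
`d = E₁d₁ + E₂d₂` in terms of the state, next state and measurements. -/
theorem combined_unknown_input_expression
    {n nw nv p p1 p2 l2 : ℕ}
    (f : (Fin n → ℝ) → (Fin n → ℝ)) (h1 : (Fin n → ℝ) → (Fin p1 → ℝ))
    (W : Matrix (Fin n) (Fin nw) ℝ) (G1 : Matrix (Fin n) (Fin p1) ℝ)
    (G2 : Matrix (Fin n) (Fin p2) ℝ) (V1 : Matrix (Fin p1) (Fin nv) ℝ)
    (C2 : Matrix (Fin l2) (Fin n) ℝ)
    (Ξ S : Matrix (Fin p1) (Fin p1) ℝ) (hSΞ : S * Ξ = 1) (hΞS : Ξ * S = 1)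
    (M2 : Matrix (Fin p2) (Fin l2) ℝ) (hM2 : M2 * (C2 * G2) = 1)
    (N : Matrix (Fin n) (Fin l2) ℝ) (hN : N = G2 * M2)
    (E1 : Matrix (Fin p) (Fin p1) ℝ) (E2 : Matrix (Fin p) (Fin p2) ℝ)
    (Φ : Matrix (Fin p) (Fin n) ℝ) (hΦ : Φ = E2 * M2 * C2)
    (κ : (Fin n → ℝ) → (Fin p → ℝ))
    (hκ : ∀ y, κ y = ((Φ * G1 - E1) * S).mulVec (h1 y) - Φ.mulVec (f y))
    (Av : Matrix (Fin p) (Fin nv) ℝ) (hAv : Av = (Φ * G1 - E1) * S * V1)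
    (Az : Matrix (Fin p) (Fin p1) ℝ) (hAz : Az = (E1 - Φ * G1) * S)
    (x : Fin n → ℝ) (w : Fin nw → ℝ) (v : Fin nv → ℝ)
    (d1 : Fin p1 → ℝ) (d2 : Fin p2 → ℝ)
    (xp : Fin n → ℝ)
    (hxp : xp = f x + W.mulVec w + G1.mulVec d1 + G2.mulVec d2)
    (z1 : Fin p1 → ℝ)
    (hz1 : z1 = h1 x + V1.mulVec v + Ξ.mulVec d1)
    (d : Fin p → ℝ) (hd : d = E1.mulVec d1 + E2.mulVec d2) :
    d = Φ.mulVec xp + κ x + Az.mulVec z1 + Av.mulVec v - (Φ * W).mulVec w := by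
  have hΦG2 : Φ * G2 = E2 := by
    rw [hΦ, Matrix.mul_assoc, Matrix.mul_assoc, hM2, Matrix.mul_one]
  subst hxp hz1 hd hAv hAz
  rw [hκ]
  simp only [Matrix.mulVec_add, Matrix.mulVec_mulVec]
  rw [show (E1 - Φ * G1) * S * Ξ = E1 - Φ * G1 by
    rw [Matrix.mul_assoc, hSΞ, Matrix.mul_one], hΦG2]
  simp only [Matrix.sub_mul, Matrix.sub_mulVec, Matrix.add_mulVec]
  abel
end

section
/- Under the system setting with E₁ ∈ ℝ^{p×p₁}, E₂ ∈ ℝ^{p×p₂}, Φ := E₂M₂C₂, κ(x) := (ΦG₁ − E₁)S h₁(x) − Φ f(x), A_v := (ΦG₁ − E₁)SV₁, A_z := (E₁ − ΦG₁)S, suppose κ_d satisfies the framer property for κ: whenever x̲ ≤ x ≤ x̄, κ_d(x̲,x̄) ≤ κ(x) ≤ κ_d(x̄,x̲). Let x, w, v, d₁, d₂ be such that x⁺ = f(x) + Ww + G₁d₁ + G₂d₂ and z₁ = h₁(x) + V₁v + Ξd₁, and let d := E₁d₁ + E₂d₂. If x̲ ≤ x ≤ x̄, x̲⁺ ≤ x⁺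 ≤ x̄⁺, v̲ ≤ v ≤ v̄ and w̲ ≤ w ≤ w̄, then d̲ ≤ d ≤ d̄, where d̲ := Φ⁺x̲⁺ − Φ⁻x̄⁺ + κ_d(x̲,x̄) + A_z z₁ + A_v⁺v̲ − A_v⁻v̄ + (ΦW)⁻w̲ − (ΦW)⁺w̄ and d̄ := Φ⁺x̄⁺ − Φ⁻x̲⁺ + κ_d(x̄,x̲) + A_z z₁ + A_v⁺v̄ − A_v⁻v̲ + (ΦW)⁻w̄ − (ΦW)⁺w̲ (the unknown-input framer property). -/
open Matrix

lemma mulVec_frame {m k : ℕ} (M : Matrix (Fin m) (Fin k) ℝ) {a y b : Fin k → ℝ}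
    (ha : a ≤ y) (hb : y ≤ b) :
    (matPos M).mulVec a - (matNeg M).mulVec b ≤ M.mulVec y ∧
    M.mulVec y ≤ (matPos M).mulVec b - (matNeg M).mulVec a := by
  have hdecomp : ∀ (u : Fin k → ℝ), M.mulVec u = (matPos M).mulVec u - (matNeg M).mulVec u := by
    intro u
    simp [matNeg, Matrix.sub_mulVec]
  have hpos : ∀ i j, 0 ≤ matPos M i j := fun i j => le_max_right _ _
  have hneg : ∀ i j, 0 ≤ matNeg M i j := fun i j => sub_nonneg.2 (le_max_left _ _)
  constructor <;> intro i <;> rw [hdecomp] <;>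
    simp only [Pi.sub_apply, Matrix.mulVec, dotProduct] <;>
    apply sub_le_sub <;> apply Finset.sum_le_sum <;> intro j _
  · exact mul_le_mul_of_nonneg_left (ha j) (hpos i j)
  · exact mul_le_mul_of_nonneg_left (hb j) (hneg i j)
  · exact mul_le_mul_of_nonneg_left (hb j) (hpos i j)
  · exact mul_le_mul_of_nonneg_left (ha j) (hneg i j)

/-- Unknown-input framer property: the proposed bounds `d̲, d̄`
frame the combined unknown input `d = E₁d₁ + E₂d₂`. -/
theorem unknown_input_framer_property
    {n nw nv p p1 p2 l2 : ℕ}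
    (f : (Fin n → ℝ) → (Fin n → ℝ)) (h1 : (Fin n → ℝ) → (Fin p1 → ℝ))
    (W : Matrix (Fin n) (Fin nw) ℝ) (G1 : Matrix (Fin n) (Fin p1) ℝ)
    (G2 : Matrix (Fin n) (Fin p2) ℝ) (V1 : Matrix (Fin p1) (Fin nv) ℝ)
    (C2 : Matrix (Fin l2) (Fin n) ℝ)
    (Ξ S : Matrix (Fin p1) (Fin p1) ℝ) (hSΞ : S * Ξ = 1) (hΞS : Ξ * S = 1)
    (M2 : Matrix (Fin p2) (Fin l2) ℝ) (hM2 : M2 * (C2 * G2) = 1)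
    (N : Matrix (Fin n) (Fin l2) ℝ) (hN : N = G2 * M2)
    (E1 : Matrix (Fin p) (Fin p1) ℝ) (E2 : Matrix (Fin p) (Fin p2) ℝ)
    (Φ : Matrix (Fin p) (Fin n) ℝ) (hΦ : Φ = E2 * M2 * C2)
    (κ : (Fin n → ℝ) → (Fin p → ℝ))
    (hκ : ∀ y, κ y = ((Φ * G1 - E1) * S).mulVec (h1 y) - Φ.mulVec (f y))
    (Av : Matrix (Fin p) (Fin nv) ℝ) (hAv : Av = (Φ * G1 - E1) * S * V1)
    (Az : Matrix (Fin p) (Fin p1) ℝ) (hAz : Az = (E1 - Φ * G1) * S)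
    (κd : (Fin n → ℝ) → (Fin n → ℝ) → (Fin p → ℝ))
    (hκd : ∀ xl y xu, xl ≤ y → y ≤ xu → κd xl xu ≤ κ y ∧ κ y ≤ κd xu xl)
    (x : Fin n → ℝ) (w : Fin nw → ℝ) (v : Fin nv → ℝ)
    (d1 : Fin p1 → ℝ) (d2 : Fin p2 → ℝ)
    (xp : Fin n → ℝ)
    (hxp : xp = f x + W.mulVec w + G1.mulVec d1 + G2.mulVec d2)
    (z1 : Fin p1 → ℝ)
    (hz1 : z1 = h1 x + V1.mulVec v + Ξ.mulVec d1)
    (d : Fin p → ℝ) (hd : d = E1.mulVec d1 + E2.mulVec d2)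
    (xlo xhi xplo xphi : Fin n → ℝ) (vl vu : Fin nv → ℝ) (wl wu : Fin nw → ℝ)
    (hx : xlo ≤ x ∧ x ≤ xhi) (hxp' : xplo ≤ xp ∧ xp ≤ xphi)
    (hv : vl ≤ v ∧ v ≤ vu) (hw : wl ≤ w ∧ w ≤ wu)
    (dlo dhi : Fin p → ℝ)
    (hdlo : dlo = (matPos Φ).mulVec xplo - (matNeg Φ).mulVec xphi + κd xlo xhi +
      Az.mulVec z1 + (matPos Av).mulVec vl - (matNeg Av).mulVec vu +
      (matNeg (Φ * W)).mulVec wl - (matPos (Φ * W)).mulVec wu)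
    (hdhi : dhi = (matPos Φ).mulVec xphi - (matNeg Φ).mulVec xplo + κd xhi xlo +
      Az.mulVec z1 + (matPos Av).mulVec vu - (matNeg Av).mulVec vl +
      (matNeg (Φ * W)).mulVec wu - (matPos (Φ * W)).mulVec wl) :
    dlo ≤ d ∧ d ≤ dhi := by
  have hΦG2 : Φ * G2 = E2 := by
    rw [hΦ, Matrix.mul_assoc, Matrix.mul_assoc, hM2, Matrix.mul_one]
  have hAzΞ : Az * Ξ = E1 - Φ * G1 := by
    rw [hAz, Matrix.mul_assoc, hSΞ, Matrix.mul_one]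
  have hAzV1 : Az * V1 = -Av := by
    rw [hAz, hAv, ← neg_sub (Φ * G1) E1, Matrix.neg_mul, Matrix.neg_mul]
  have hAzS : Az = -((Φ * G1 - E1) * S) := by
    rw [hAz, ← neg_sub (Φ * G1) E1, Matrix.neg_mul]
  have e1 : Φ.mulVec (G2.mulVec d2) = E2.mulVec d2 := by
    rw [Matrix.mulVec_mulVec, hΦG2]
  have e2 : Az.mulVec (Ξ.mulVec d1) = E1.mulVec d1 - (Φ * G1).mulVec d1 := by
    rw [Matrix.mulVec_mulVec, hAzΞ, Matrix.sub_mulVec]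
  have e3 : Az.mulVec (V1.mulVec v) = -(Av.mulVec v) := by
    rw [Matrix.mulVec_mulVec, hAzV1, Matrix.neg_mulVec]
  have e4 : Az.mulVec (h1 x) = -(((Φ * G1 - E1) * S).mulVec (h1 x)) := by
    rw [hAzS, Matrix.neg_mulVec]
  have e5 : Φ.mulVec (G1.mulVec d1) = (Φ * G1).mulVec d1 := Matrix.mulVec_mulVec ..
  have e6 : Φ.mulVec (W.mulVec w) = (Φ * W).mulVec w := Matrix.mulVec_mulVec ..
  have key : d = Φ.mulVec xp + κ x + Az.mulVec z1 + Av.mulVec v - (Φ * W).mulVec w := by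
    rw [hd, hxp, hz1, hκ]
    simp only [Matrix.mulVec_add, e1, e2, e3, e4, e5, e6]
    abel
  obtain ⟨hx1, hx2⟩ := hx
  obtain ⟨hp1', hp2'⟩ := hxp'
  obtain ⟨hv1, hv2⟩ := hv
  obtain ⟨hw1, hw2⟩ := hw
  obtain ⟨b1, b2⟩ := mulVec_frame Φ hp1' hp2'
  obtain ⟨b3, b4⟩ := mulVec_frame Av hv1 hv2
  obtain ⟨b5, b6⟩ := mulVec_frame (Φ * W) hw1 hw2
  obtain ⟨b7, b8⟩ := hκd xlo x xhi hx1 hx2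
  have b9 : (matNeg (Φ * W)).mulVec wl - (matPos (Φ * W)).mulVec wu ≤ -((Φ * W).mulVec w) := by
    have := neg_le_neg b6
    rwa [neg_sub] at this
  have b10 : -((Φ * W).mulVec w) ≤ (matNeg (Φ * W)).mulVec wu - (matPos (Φ * W)).mulVec wl := by
    have := neg_le_neg b5
    rwa [neg_sub] at this
  constructor
  · rw [key, hdlo]
    have h := add_le_add (add_le_add (add_le_add (add_le_add b1 b7) (le_refl (Az.mulVec z1))) b3) b9
    calc matPos Φ *ᵥ xplo - matNeg Φ *ᵥ xphi + κd xlo xhi + Az *ᵥ z1 + matPos Av *ᵥ vl -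
          matNeg Av *ᵥ vu + matNeg (Φ * W) *ᵥ wl - matPos (Φ * W) *ᵥ wu
        = (matPos Φ *ᵥ xplo - matNeg Φ *ᵥ xphi) + κd xlo xhi + Az *ᵥ z1 +
          (matPos Av *ᵥ vl - matNeg Av *ᵥ vu) +
          (matNeg (Φ * W) *ᵥ wl - matPos (Φ * W) *ᵥ wu) := by abel
      _ ≤ Φ *ᵥ xp + κ x + Az *ᵥ z1 + Av *ᵥ v + -((Φ * W) *ᵥ w) := h
      _ = Φ *ᵥ xp + κ x + Az *ᵥ z1 + Av *ᵥ v - (Φ * W) *ᵥ w := by abel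
  · rw [key, hdhi]
    have h := add_le_add (add_le_add (add_le_add (add_le_add b2 b8) (le_refl (Az.mulVec z1))) b4) b10
    calc Φ *ᵥ xp + κ x + Az *ᵥ z1 + Av *ᵥ v - (Φ * W) *ᵥ w
        = (Φ *ᵥ xp) + κ x + Az *ᵥ z1 + (Av *ᵥ v) + -((Φ * W) *ᵥ w) := by abel
      _ ≤ (matPos Φ *ᵥ xphi - matNeg Φ *ᵥ xplo) + κd xhi xlo + Az *ᵥ z1 +
          (matPos Av *ᵥ vu - matNeg Av *ᵥ vl) +
          (matNeg (Φ * W) *ᵥ wu - matPos (Φ * W) *ᵥ wl) := h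
      _ = matPos Φ *ᵥ xphi - matNeg Φ *ᵥ xplo + κd xhi xlo + Az *ᵥ z1 + matPos Av *ᵥ vu -
          matNeg Av *ᵥ vl + matNeg (Φ * W) *ᵥ wu - matPos (Φ * W) *ᵥ wl := by abel
end

section
/- Consider the framer recursion: γ̲_{k+1} = (A−LC₂)⁺γ̲_k − (A−LC₂)⁻γ̄_k + ρ_d(x̲_k,x̄_k) + D⁻ε̲ − D⁺ε̄ + L⁻ψ_{2,d}(x̲_k,x̄_k) − L⁺ψ_{2,d}(x̄_k,x̲_k) + V̂⁻v̲ − V̂⁺v̄ + Ŵ⁺w̲ − Ŵ⁻w̄ + ẑ_k, γ̄_{k+1} = (A−LC₂)⁺γ̄_k − (A−LC₂)⁻γ̲_k + ρ_d(x̄_k,x̲_k) + D⁻ε̄ − D⁺ε̲ + L⁻ψ_{2,d}(x̄_k,x̲_k) − L⁺ψ_{2,d}(x̲_k,x̄_k) + V̂⁻v̄ − V̂⁺v̲ + Ŵ⁺w̄ − Ŵ⁻w̲ + ẑ_k, x̲_k = γ̲_k + ΛN z_{2,k} + Λ⁻ε̲ − Λ⁺ε̄ + (ΛNV₂)⁻v̲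 − (ΛNV₂)⁺v̄, x̄_k = γ̄_k + ΛN z_{2,k} + Λ⁻ε̄ − Λ⁺ε̲ + (ΛNV₂)⁻v̄ − (ΛNV₂)⁺v̲, for arbitrary maps ρ_d, ψ_{2,d} : ℝⁿ×ℝⁿ → appropriate spaces and arbitrary sequences z_{1,k}, z_{2,k}. Define e^x_k := x̄_k − x̲_k, δ^ρ_k := ρ_d(x̄_k,x̲_k) − ρ_d(x̲_k,x̄_k), δ^{ψ₂}_k := ψ_{2,d}(x̄_k,x̲_k) − ψ_{2,d}(x̲_k,x̄_k), δ^w := w̄ − w̲, δ^v := v̄ − v̲, δ^ε := ε̄ − ε̲. Then for all k ∈ ℕ: e^x_{k+1} = |A−LC₂|·e^x_k + δ^ρ_k + |L|·δ^{ψ₂}_k + |Ŵ|·δ^w + (|V_a − LV_b| − |A−LC₂|·|ΛNV₂| + |ΛNV₂|)·δ^v + (|Λ| + |D_a − LD_b| − |A−LC₂|·|Λ|)·δ^ε. -/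
open Matrix

/-- Entrywise absolute value `|M| = M⁺ + M⁻`. -/
noncomputable def matAbs {m n : ℕ} (M : Matrix (Fin m) (Fin n) ℝ) : Matrix (Fin m) (Fin n) ℝ :=
  matPos M + matNeg M

/-- Lemma 2, equality part: exact state framer error dynamics of
the resilient interval observer recursion. -/
theorem framer_error_dynamics_equality
    {n nw nv p1 l2 : ℕ}
    (W : Matrix (Fin n) (Fin nw) ℝ) (G1 : Matrix (Fin n) (Fin p1) ℝ)
    (V1 : Matrix (Fin p1) (Fin nv) ℝ) (V2 : Matrix (Fin l2) (Fin nv) ℝ)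
    (C2 : Matrix (Fin l2) (Fin n) ℝ) (S : Matrix (Fin p1) (Fin p1) ℝ)
    (A Λ : Matrix (Fin n) (Fin n) ℝ) (N : Matrix (Fin n) (Fin l2) ℝ)
    (L : Matrix (Fin n) (Fin l2) ℝ)
    (Vhat : Matrix (Fin n) (Fin nv) ℝ)
    (hVhat : Vhat = (A - L * C2) * Λ * N * V2 + L * V2 + Λ * (1 - N * C2) * G1 * S * V1)
    (D : Matrix (Fin n) (Fin n) ℝ) (hD : D = (A - L * C2) * Λ)
    (What : Matrix (Fin n) (Fin nw) ℝ) (hWhat : What = Λ * (1 - N * C2) * W)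
    (Va : Matrix (Fin n) (Fin nv) ℝ)
    (hVa : Va = A * Λ * N * V2 + Λ * (1 - N * C2) * G1 * S * V1)
    (Vb : Matrix (Fin l2) (Fin nv) ℝ) (hVb : Vb = (C2 * Λ * N - 1) * V2)
    (Da : Matrix (Fin n) (Fin n) ℝ) (hDa : Da = A * Λ)
    (Db : Matrix (Fin l2) (Fin n) ℝ) (hDb : Db = C2 * Λ)
    -- arbitrary decomposition maps and sequences
    (ρd : (Fin n → ℝ) → (Fin n → ℝ) → (Fin n → ℝ))
    (ψ2d : (Fin n → ℝ) → (Fin n → ℝ) → (Fin l2 → ℝ))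
    (z2 : ℕ → Fin l2 → ℝ) (zhat : ℕ → Fin n → ℝ)
    (wl wu : Fin nw → ℝ) (vl vu : Fin nv → ℝ) (εl εu : Fin n → ℝ)
    (γlo γhi xlo xhi : ℕ → Fin n → ℝ)
    (hγlo : ∀ k, γlo (k + 1) =
      (matPos (A - L * C2)).mulVec (γlo k) - (matNeg (A - L * C2)).mulVec (γhi k) +
      ρd (xlo k) (xhi k) +
      (matNeg D).mulVec εl - (matPos D).mulVec εu +
      (matNeg L).mulVec (ψ2d (xlo k) (xhi k)) - (matPos L).mulVec (ψ2d (xhi k) (xlo k)) +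
      (matNeg Vhat).mulVec vl - (matPos Vhat).mulVec vu +
      (matPos What).mulVec wl - (matNeg What).mulVec wu + zhat k)
    (hγhi : ∀ k, γhi (k + 1) =
      (matPos (A - L * C2)).mulVec (γhi k) - (matNeg (A - L * C2)).mulVec (γlo k) +
      ρd (xhi k) (xlo k) +
      (matNeg D).mulVec εu - (matPos D).mulVec εl +
      (matNeg L).mulVec (ψ2d (xhi k) (xlo k)) - (matPos L).mulVec (ψ2d (xlo k) (xhi k)) +
      (matNeg Vhat).mulVec vu - (matPos Vhat).mulVec vl +
      (matPos What).mulVec wu - (matNeg What).mulVec wl + zhat k)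
    (hxlo : ∀ k, xlo k = γlo k + (Λ * N).mulVec (z2 k) +
      (matNeg Λ).mulVec εl - (matPos Λ).mulVec εu +
      (matNeg (Λ * N * V2)).mulVec vl - (matPos (Λ * N * V2)).mulVec vu)
    (hxhi : ∀ k, xhi k = γhi k + (Λ * N).mulVec (z2 k) +
      (matNeg Λ).mulVec εu - (matPos Λ).mulVec εl +
      (matNeg (Λ * N * V2)).mulVec vu - (matPos (Λ * N * V2)).mulVec vl) :
    ∀ k, xhi (k + 1) - xlo (k + 1) =
      (matAbs (A - L * C2)).mulVec (xhi k - xlo k) +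
      (ρd (xhi k) (xlo k) - ρd (xlo k) (xhi k)) +
      (matAbs L).mulVec (ψ2d (xhi k) (xlo k) - ψ2d (xlo k) (xhi k)) +
      (matAbs What).mulVec (wu - wl) +
      (matAbs (Va - L * Vb) - matAbs (A - L * C2) * matAbs (Λ * N * V2) +
        matAbs (Λ * N * V2)).mulVec (vu - vl) +
      (matAbs Λ + matAbs (Da - L * Db) - matAbs (A - L * C2) * matAbs Λ).mulVec (εu - εl) := by
  intro k
  have hD' : Da - L * Db = D := by subst hDa; subst hDb; subst hD; rw [Matrix.sub_mul, Matrix.mul_assoc]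
  have hV' : Va - L * Vb = Vhat := by
    subst hVa; subst hVb; subst hVhat
    simp only [Matrix.sub_mul, Matrix.mul_sub, Matrix.add_mul, Matrix.mul_add, Matrix.one_mul, Matrix.mul_one, Matrix.mul_assoc]
    abel
  rw [hD', hV']
  simp only [hγhi k, hγlo k, hxhi, hxlo, matAbs, ← Matrix.mulVec_mulVec,
    Matrix.add_mulVec, Matrix.sub_mulVec, Matrix.mulVec_add, Matrix.mulVec_sub]
  abel
end

section
/- (Theorem 2, Case (i).) Let P ∈ ℝ^{n×n} be symmetric positive definite with nonpositive off-diagonal entries (−P is Metzler), Γ ∈ ℝ^{n×l₂} with Γ ≥ 0, and suppose PA − ΓC₂ ≥ 0, PV_a − ΓV_b ≥ 0, PD_a − ΓD_b ≥ 0 (entrywise). Set L := P⁻¹Γ. Then L ≥ 0, A − LC₂ ≥ 0, V_a − LV_b ≥ 0, D_a − LD_b ≥ 0. Moreover, for any nonnegative sequence e^x_k ∈ ℝⁿ and vectors δ^ρ_k, δ^{ψ₂}_k, δ^v, δ^w, δ^ε ≥ 0 satisfying the error-dynamics equality e^x_{k+1} = |A−LC₂|·e^x_k + δ^ρ_k +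 |L|·δ^{ψ₂}_k + |Ŵ|·δ^w + (|V_a − LV_b| − |A−LC₂|·|ΛNV₂| + |ΛNV₂|)·δ^v + (|Λ| + |D_a − LD_b| − |A−LC₂|·|Λ|)·δ^ε and the bounds δ^ρ_k ≤ F̄_ρ·e^x_k, δ^{ψ₂}_k ≤ F̄_{ψ₂}·e^x_k, it holds that e^x_{k+1} ≤ (Ã − LC̃)·e^x_k + (B̃ − LD̃)·w̃, where Ã := A + F̄_ρ, C̃ := C₂ − F̄_{ψ₂}, B̃ := [V_a + (I−A)|ΛNV₂|, |Ŵ|, D_a + (I−A)|Λ|], D̃ := [V_b − C₂|ΛNV₂|, 0, D_b − C₂|Λ|], and w̃ := (δ^v; δ^w; δ^ε) is the stacked vector. -/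
open Matrix

/-!
A symmetric positive definite `P` with nonpositive off-diagonal entries is inverse-nonnegative:
if `P x ≥ 0`, pairing with the negative part gives `x⁻ ⬝ P x⁻ ≤ x⁻ ⬝ P x⁺ ≤ 0`, because
`x⁻ᵢ x⁺ᵢ = 0` and the off-diagonal entries of `P` are `≤ 0`; hence `x⁻ = 0`. Since
`X - P⁻¹ Γ Y = P⁻¹ (P X - Γ Y)`, the design conditions give `L ≥ 0`, `A - L C₂ ≥ 0`,
`V_a - L V_b ≥ 0` and `D_a - L D_b ≥ 0`. On these matrices `|·|` is the identity, so the error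
dynamics become linear, and the comparison system follows from the sector bounds on `δρ` and
`δψ₂` together with `L ≥ 0`.
-/

lemma Real.negPart_mul_posPart (a : ℝ) : a⁻ * a⁺ = 0 := by
  rcases le_total 0 a with h | h
  · simp [negPart_eq_zero.2 h]
  · simp [posPart_eq_zero.2 h]

lemma Matrix.mulVec_le_mulVec_of_nonneg {m n : Type*} [Fintype n] {M : Matrix m n ℝ}
    (hM : ∀ i j, 0 ≤ M i j) {u v : n → ℝ} (huv : u ≤ v) : M *ᵥ u ≤ M *ᵥ v := fun i =>
  Finset.sum_le_sum fun j _ => mul_le_mul_of_nonneg_left (huv j) (hM i j)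

section InverseNonneg

variable {ι κ μ : Type*} [Fintype ι] {P : Matrix ι ι ℝ}

lemma negPart_dotProduct_mulVec_posPart_nonpos (hPoff : ∀ i j, i ≠ j → P i j ≤ 0)
    (x : ι → ℝ) : x⁻ ⬝ᵥ P *ᵥ x⁺ ≤ 0 := by
  simp only [dotProduct, mulVec, Finset.mul_sum]
  refine Finset.sum_nonpos fun i _ => Finset.sum_nonpos fun j _ => ?_
  rcases eq_or_ne i j with rfl | hij
  · simp only [Pi.negPart_apply, Pi.posPart_apply]
    rw [mul_left_comm, Real.negPart_mul_posPart, mul_zero]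
  · exact mul_nonpos_of_nonneg_of_nonpos (negPart_nonneg _)
      (mul_nonpos_of_nonpos_of_nonneg (hPoff i j hij) (posPart_nonneg _))

theorem Matrix.PosDef.nonneg_of_mulVec_nonneg (hP : P.PosDef)
    (hPoff : ∀ i j, i ≠ j → P i j ≤ 0) {x : ι → ℝ} (hx : 0 ≤ P *ᵥ x) : 0 ≤ x := by
  have hcross : 0 ≤ x⁻ ⬝ᵥ P *ᵥ x⁺ - x⁻ ⬝ᵥ P *ᵥ x⁻ := by
    rw [← dotProduct_sub, ← mulVec_sub, posPart_sub_negPart]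
    exact dotProduct_nonneg_of_nonneg (negPart_nonneg x) hx
  have hquad : x⁻ ⬝ᵥ P *ᵥ x⁻ ≤ 0 := by
    linarith [negPart_dotProduct_mulVec_posPart_nonpos hPoff x]
  have hneg : x⁻ = 0 := by
    by_contra h
    have := hP.dotProduct_mulVec_pos h
    rw [star_trivial] at this
    linarith
  rw [← posPart_sub_negPart x, hneg, sub_zero]
  exact posPart_nonneg x

theorem Matrix.PosDef.nonneg_of_mul_nonneg (hP : P.PosDef) (hPoff : ∀ i j, i ≠ j → P i j ≤ 0)
    {X : Matrix ι κ ℝ} (h : ∀ i j, 0 ≤ (P * X) i j) : ∀ i j, 0 ≤ X i j := fun i j =>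
  hP.nonneg_of_mulVec_nonneg hPoff (x := fun k => X k j) (fun k => h k j) i

variable [DecidableEq ι]

theorem Matrix.PosDef.inv_mul_nonneg (hP : P.PosDef) (hPoff : ∀ i j, i ≠ j → P i j ≤ 0)
    {Γ : Matrix ι κ ℝ} (hΓ : ∀ i j, 0 ≤ Γ i j) : ∀ i j, 0 ≤ (P⁻¹ * Γ) i j :=
  hP.nonneg_of_mul_nonneg hPoff <| by
    rwa [mul_nonsing_inv_cancel_left _ _ hP.det_pos.ne'.isUnit]

theorem Matrix.PosDef.sub_inv_mul_mul_nonneg [Fintype μ] (hP : P.PosDef)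
    (hPoff : ∀ i j, i ≠ j → P i j ≤ 0) {Γ : Matrix ι μ ℝ} {X : Matrix ι κ ℝ}
    {Y : Matrix μ κ ℝ} (h : ∀ i j, 0 ≤ (P * X - Γ * Y) i j) :
    ∀ i j, 0 ≤ (X - P⁻¹ * Γ * Y) i j :=
  hP.nonneg_of_mul_nonneg hPoff <| by
    rwa [Matrix.mul_sub, Matrix.mul_assoc, mul_nonsing_inv_cancel_left _ _ hP.det_pos.ne'.isUnit]

end InverseNonneg

section Comparison

variable {m l p : Type*} [Fintype m] [Fintype l]

lemma sub_mul_sub_sub_mul_add_eq [DecidableEq m] (X : Matrix m p ℝ) (Y : Matrix l p ℝ) (A : Matrix m m ℝ)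
    (L : Matrix m l ℝ) (C : Matrix l m ℝ) (Q : Matrix m p ℝ) :
    X - L * Y - (A - L * C) * Q + Q = X + (1 - A) * Q - L * (Y - C * Q) := by
  simp only [Matrix.sub_mul, Matrix.mul_sub, Matrix.one_mul, Matrix.mul_assoc]
  abel

lemma sub_mul_mulVec_add_le {A Fρ : Matrix m m ℝ} {L : Matrix m l ℝ} {C Fψ : Matrix l m ℝ}
    (hL : ∀ i j, 0 ≤ L i j) {e δρ : m → ℝ} {δψ : l → ℝ} (hρ : δρ ≤ Fρ *ᵥ e)
    (hψ : δψ ≤ Fψ *ᵥ e) : (A - L * C) *ᵥ e + δρ + L *ᵥ δψ ≤ (A + Fρ - L * (C - Fψ)) *ᵥ e :=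
  calc (A - L * C) *ᵥ e + δρ + L *ᵥ δψ ≤ (A - L * C) *ᵥ e + Fρ *ᵥ e + L *ᵥ (Fψ *ᵥ e) :=
        add_le_add (add_le_add_right hρ _) (mulVec_le_mulVec_of_nonneg hL hψ)
    _ = (A + Fρ - L * (C - Fψ)) *ᵥ e := by
        simp only [sub_mulVec, add_mulVec, mulVec_mulVec, Matrix.mul_sub]
        abel

end Comparison

lemma matAbs_of_nonneg {m n : ℕ} {M : Matrix (Fin m) (Fin n) ℝ} (hM : ∀ i j, 0 ≤ M i j) :
    matAbs M = M := by
  ext i j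
  simp [matAbs, matNeg, matPos, max_eq_left (hM i j)]

theorem iss_synthesis_case_i_general
    {n nw nv l2 : ℕ}
    (V2 : Matrix (Fin l2) (Fin nv) ℝ)
    (C2 : Matrix (Fin l2) (Fin n) ℝ)
    (A Λ : Matrix (Fin n) (Fin n) ℝ) (N : Matrix (Fin n) (Fin l2) ℝ)
    (Va : Matrix (Fin n) (Fin nv) ℝ)
    (Vb : Matrix (Fin l2) (Fin nv) ℝ)
    (Da : Matrix (Fin n) (Fin n) ℝ)
    (Db : Matrix (Fin l2) (Fin n) ℝ)
    (What : Matrix (Fin n) (Fin nw) ℝ)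
    (Fρ : Matrix (Fin n) (Fin n) ℝ) (Fψ2 : Matrix (Fin l2) (Fin n) ℝ)
    (P : Matrix (Fin n) (Fin n) ℝ) (hP : P.PosDef)
    (hPoff : ∀ i j, i ≠ j → P i j ≤ 0)
    (Γ : Matrix (Fin n) (Fin l2) ℝ) (hΓ : ∀ i j, 0 ≤ Γ i j)
    (hPA : ∀ i j, 0 ≤ (P * A - Γ * C2) i j)
    (hPVa : ∀ i j, 0 ≤ (P * Va - Γ * Vb) i j)
    (hPDa : ∀ i j, 0 ≤ (P * Da - Γ * Db) i j)
    (L : Matrix (Fin n) (Fin l2) ℝ) (hL : L = P⁻¹ * Γ) :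
    (∀ i j, 0 ≤ L i j) ∧
    (∀ i j, 0 ≤ (A - L * C2) i j) ∧
    (∀ i j, 0 ≤ (Va - L * Vb) i j) ∧
    (∀ i j, 0 ≤ (Da - L * Db) i j) ∧
    (∀ (e : ℕ → Fin n → ℝ) (δρ : ℕ → Fin n → ℝ) (δψ2 : ℕ → Fin l2 → ℝ)
      (δv : Fin nv → ℝ) (δw : Fin nw → ℝ) (δε : Fin n → ℝ),
      (∀ k, 0 ≤ e k) → (∀ k, 0 ≤ δρ k) → (∀ k, 0 ≤ δψ2 k) →
      0 ≤ δv → 0 ≤ δw → 0 ≤ δε →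
      (∀ k, e (k + 1) =
        (matAbs (A - L * C2)).mulVec (e k) + δρ k + (matAbs L).mulVec (δψ2 k) +
        (matAbs What).mulVec δw +
        (matAbs (Va - L * Vb) - matAbs (A - L * C2) * matAbs (Λ * N * V2) +
          matAbs (Λ * N * V2)).mulVec δv +
        (matAbs Λ + matAbs (Da - L * Db) - matAbs (A - L * C2) * matAbs Λ).mulVec δε) →
      (∀ k, δρ k ≤ Fρ.mulVec (e k)) → (∀ k, δψ2 k ≤ Fψ2.mulVec (e k)) →
      ∀ k, e (k + 1) ≤
        ((A + Fρ) - L * (C2 - Fψ2)).mulVec (e k) +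
        ((Va + (1 - A) * matAbs (Λ * N * V2)) -
          L * (Vb - C2 * matAbs (Λ * N * V2))).mulVec δv +
        (matAbs What).mulVec δw +
        ((Da + (1 - A) * matAbs Λ) - L * (Db - C2 * matAbs Λ)).mulVec δε) := by
  have hL0 : ∀ i j, 0 ≤ L i j := hL ▸ hP.inv_mul_nonneg hPoff hΓ
  have hA' : ∀ i j, 0 ≤ (A - L * C2) i j := hL ▸ hP.sub_inv_mul_mul_nonneg hPoff hPA
  have hVa' : ∀ i j, 0 ≤ (Va - L * Vb) i j := hL ▸ hP.sub_inv_mul_mul_nonneg hPoff hPVa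
  have hDa' : ∀ i j, 0 ≤ (Da - L * Db) i j := hL ▸ hP.sub_inv_mul_mul_nonneg hPoff hPDa
  refine ⟨hL0, hA', hVa', hDa', ?_⟩
  intro e δρ δψ2 δv δw δε _ _ _ _ _ _ hdyn hρ hψ2 k
  have he := sub_mul_mulVec_add_le (A := A) (C := C2) hL0 (hρ k) (hψ2 k)
  rw [hdyn k, matAbs_of_nonneg hA', matAbs_of_nonneg hL0, matAbs_of_nonneg hVa',
    matAbs_of_nonneg hDa', add_sub_assoc (matAbs Λ), add_comm (matAbs Λ),
    sub_mul_sub_sub_mul_add_eq, sub_mul_sub_sub_mul_add_eq]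
  intro i
  have := he i
  simp only [Pi.add_apply] at this ⊢
  linarith

/-- Theorem 2, Case (i): positivity of the designed gain and the
linear comparison system for the error dynamics. -/
theorem iss_synthesis_case_i
    {n nw nv p1 l2 : ℕ}
    (W : Matrix (Fin n) (Fin nw) ℝ) (G1 : Matrix (Fin n) (Fin p1) ℝ)
    (V1 : Matrix (Fin p1) (Fin nv) ℝ) (V2 : Matrix (Fin l2) (Fin nv) ℝ)
    (C2 : Matrix (Fin l2) (Fin n) ℝ) (S : Matrix (Fin p1) (Fin p1) ℝ)
    (A Λ : Matrix (Fin n) (Fin n) ℝ) (N : Matrix (Fin n) (Fin l2) ℝ)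
    (Va : Matrix (Fin n) (Fin nv) ℝ)
    (hVa : Va = A * Λ * N * V2 + Λ * (1 - N * C2) * G1 * S * V1)
    (Vb : Matrix (Fin l2) (Fin nv) ℝ) (hVb : Vb = (C2 * Λ * N - 1) * V2)
    (Da : Matrix (Fin n) (Fin n) ℝ) (hDa : Da = A * Λ)
    (Db : Matrix (Fin l2) (Fin n) ℝ) (hDb : Db = C2 * Λ)
    (What : Matrix (Fin n) (Fin nw) ℝ) (hWhat : What = Λ * (1 - N * C2) * W)
    (Fρ : Matrix (Fin n) (Fin n) ℝ) (Fψ2 : Matrix (Fin l2) (Fin n) ℝ)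
    (hFρ : ∀ i j, 0 ≤ Fρ i j) (hFψ2 : ∀ i j, 0 ≤ Fψ2 i j)
    (P : Matrix (Fin n) (Fin n) ℝ) (hP : P.PosDef)
    (hPoff : ∀ i j, i ≠ j → P i j ≤ 0)
    (Γ : Matrix (Fin n) (Fin l2) ℝ) (hΓ : ∀ i j, 0 ≤ Γ i j)
    (hPA : ∀ i j, 0 ≤ (P * A - Γ * C2) i j)
    (hPVa : ∀ i j, 0 ≤ (P * Va - Γ * Vb) i j)
    (hPDa : ∀ i j, 0 ≤ (P * Da - Γ * Db) i j)
    (L : Matrix (Fin n) (Fin l2) ℝ) (hL : L = P⁻¹ * Γ) :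
    (∀ i j, 0 ≤ L i j) ∧
    (∀ i j, 0 ≤ (A - L * C2) i j) ∧
    (∀ i j, 0 ≤ (Va - L * Vb) i j) ∧
    (∀ i j, 0 ≤ (Da - L * Db) i j) ∧
    (∀ (e : ℕ → Fin n → ℝ) (δρ : ℕ → Fin n → ℝ) (δψ2 : ℕ → Fin l2 → ℝ)
      (δv : Fin nv → ℝ) (δw : Fin nw → ℝ) (δε : Fin n → ℝ),
      (∀ k, 0 ≤ e k) → (∀ k, 0 ≤ δρ k) → (∀ k, 0 ≤ δψ2 k) →
      0 ≤ δv → 0 ≤ δw → 0 ≤ δε →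
      (∀ k, e (k + 1) =
        (matAbs (A - L * C2)).mulVec (e k) + δρ k + (matAbs L).mulVec (δψ2 k) +
        (matAbs What).mulVec δw +
        (matAbs (Va - L * Vb) - matAbs (A - L * C2) * matAbs (Λ * N * V2) +
          matAbs (Λ * N * V2)).mulVec δv +
        (matAbs Λ + matAbs (Da - L * Db) - matAbs (A - L * C2) * matAbs Λ).mulVec δε) →
      (∀ k, δρ k ≤ Fρ.mulVec (e k)) → (∀ k, δψ2 k ≤ Fψ2.mulVec (e k)) →
      ∀ k, e (k + 1) ≤
        ((A + Fρ) - L * (C2 - Fψ2)).mulVec (e k) +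
        ((Va + (1 - A) * matAbs (Λ * N * V2)) -
          L * (Vb - C2 * matAbs (Λ * N * V2))).mulVec δv +
        (matAbs What).mulVec δw +
        ((Da + (1 - A) * matAbs Λ) - L * (Db - C2 * matAbs Λ)).mulVec δε) :=
  iss_synthesis_case_i_general V2 C2 A Λ N Va Vb Da Db What Fρ Fψ2 P hP hPoff Γ hΓ hPA hPVa hPDa L
    hL
end
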